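/- Define F̃ : ℕ → ℕ recursively by F̃(N) = F̃(⌊N/3 + log₂(N) + 1⌋) + 1 for N > 8 and F̃(N) = 1 for N ≤ 8. Then F̃(N) = log₃(N) + O(1); that is, there exists a constant C such that |F̃(N) − log₃(N)| ≤ C for all N ≥ 2. -/

import Mathlib

/-!
The step map `N ↦ ⌊N/3 + log₂ N + 1⌋` lies strictly above `N/3` and at most `N/3 + O(√N)`, so
one step of the recursion lowers `log₃ N` by `1` up to an error `O(1/√N)`. Since `N` shrinks
geometrically along an orbit, these errors are summable: `log₃ N - 2` is a subsolution of the
recursion and `log₃ N + C - 24/√N` a supersolution, because for `N ≥ 1296` the drop of `√N` by a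
factor `2/3` lets the term `-24/√N` absorb the error `12/√N`. Strong induction compares `F̃` with
both.
-/

open Real

namespace Ftilde

theorem subsolution_le {F Φ : ℕ → ℝ} {g : ℕ → ℕ} {n₀ : ℕ} {c : ℝ}
    (hg : ∀ N, n₀ < N → g N < N) (hF : ∀ N, n₀ < N → F N = F (g N) + c)
    (hbase : ∀ N ≤ n₀, Φ N ≤ F N) (hstep : ∀ N, n₀ < N → Φ N ≤ Φ (g N) + c)
    (N : ℕ) : Φ N ≤ F N := by
  induction N using Nat.strong_induction_on with
  | _ N ih =>
    rcases le_or_gt N n₀ with hN | hN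
    · exact hbase N hN
    · linarith [hF N hN, hstep N hN, ih _ (hg N hN)]

theorem le_supersolution {F Φ : ℕ → ℝ} {g : ℕ → ℕ} {n₀ : ℕ} {c : ℝ}
    (hg : ∀ N, n₀ < N → g N < N) (hF : ∀ N, n₀ < N → F N = F (g N) + c)
    (hbase : ∀ N ≤ n₀, F N ≤ Φ N) (hstep : ∀ N, n₀ < N → Φ (g N) + c ≤ Φ N)
    (N : ℕ) : F N ≤ Φ N :=
  neg_le_neg_iff.1 <| subsolution_le (F := -F) (Φ := -Φ) (c := -c) hg
    (fun N hN => by simp [hF N hN]; ring) (fun N hN => neg_le_neg (hbase N hN))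
    (fun N hN => by simpa using (by linarith [hstep N hN] : -Φ N ≤ -Φ (g N) + -c)) N

theorem logb_two_le_eight_fifteenths_mul {x : ℝ} (hx : 0 < x) : logb 2 x ≤ 8 / 15 * x := by
  have hlog : log x ≤ x / exp 1 := by
    have := log_le_sub_one_of_pos (div_pos hx (exp_pos 1))
    rwa [log_div hx.ne' (exp_pos 1).ne', log_exp, sub_le_sub_iff_right] at this
  have he : 15 / 8 < exp 1 * log 2 := by nlinarith [exp_one_gt_d9, log_two_gt_d9]
  rw [logb, div_le_iff₀ (log_pos one_lt_two)]
  calc log x ≤ x / exp 1 := hlog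
    _ ≤ 8 / 15 * x * log 2 := by rw [div_le_iff₀ (exp_pos 1)]; nlinarith

theorem logb_two_le_three_mul_sqrt {x : ℝ} (hx : 0 ≤ x) : logb 2 x ≤ 3 * √x := by
  have hlog : log x ≤ 2 * √x := by
    simpa [sqrt_eq_rpow, div_eq_mul_inv, mul_comm] using
      log_le_rpow_div hx (by norm_num : (0 : ℝ) < 1 / 2)
  rw [logb, div_le_iff₀ (log_pos one_lt_two)]
  nlinarith [log_two_gt_d9, sqrt_nonneg x]

theorem logb_le_logb_add_div_sub_one {b x y : ℝ} (hb : exp 1 ≤ b) (hx : 0 < x) (hxy : x ≤ y) :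
    logb b y ≤ logb b x + (y / x - 1) := by
  have hb1 : 1 ≤ log b := by simpa using log_le_log (exp_pos 1) hb
  have hr : 0 ≤ log (y / x) := log_nonneg ((one_le_div hx).2 hxy)
  have : logb b y - logb b x ≤ log (y / x) := by
    rw [← logb_div (hx.trans_le hxy).ne' hx.ne', logb]
    exact div_le_self hr hb1
  linarith [log_le_sub_one_of_pos (div_pos (hx.trans_le hxy) hx)]

theorem logb_natCast_nonneg {b : ℝ} (hb : 1 ≤ b) (N : ℕ) : 0 ≤ logb b N :=
  div_nonneg (log_natCast_nonneg N) (log_nonneg hb)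

noncomputable def step (N : ℕ) : ℕ := ⌊(N : ℝ) / 3 + logb 2 N + 1⌋₊

theorem div_three_lt_step (N : ℕ) : (N : ℝ) / 3 < step N := by
  unfold step
  linarith [Nat.sub_one_lt_floor ((N : ℝ) / 3 + logb 2 N + 1), logb_natCast_nonneg one_le_two N]

theorem step_le (N : ℕ) : (step N : ℝ) ≤ N / 3 + 3 * √N + 1 := by
  unfold step
  have := Nat.floor_le (by positivity [logb_natCast_nonneg one_le_two N] :
    0 ≤ (N : ℝ) / 3 + logb 2 N + 1)
  linarith [logb_two_le_three_mul_sqrt N.cast_nonneg]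

theorem step_lt {N : ℕ} (hN : 8 < N) : step N < N := by
  have hN' : (8 : ℝ) < N := by exact_mod_cast hN
  rw [step, Nat.floor_lt (by positivity [logb_natCast_nonneg one_le_two N])]
  linarith [logb_two_le_eight_fifteenths_mul (by linarith : (0 : ℝ) < N)]

theorem sqrt_step_le {N : ℕ} (hN : 1296 ≤ N) : √(step N : ℝ) ≤ 2 / 3 * √N := by
  have hs : 36 ≤ √(N : ℝ) :=
    le_sqrt_of_sq_le (by exact_mod_cast (by norm_num; omega : 36 ^ 2 ≤ N))
  rw [← sqrt_sq (by positivity : 0 ≤ 2 / 3 * √(N : ℝ))]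
  apply sqrt_le_sqrt
  have hsq := sq_sqrt (N.cast_nonneg : (0 : ℝ) ≤ N)
  rw [mul_pow, hsq]
  nlinarith [step_le N]

theorem logb_three_le_logb_three_step_add_one {N : ℕ} (hN : 0 < N) :
    logb 3 N ≤ logb 3 (step N) + 1 := by
  have hN' : (0 : ℝ) < N := by exact_mod_cast hN
  have hM : (0 : ℝ) < step N := by linarith [div_three_lt_step N]
  calc logb 3 N ≤ logb 3 (3 * step N) :=
        logb_le_logb_of_le (by norm_num) hN' (by linarith [div_three_lt_step N])
    _ = logb 3 (step N) + 1 := by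
        rw [logb_mul (by norm_num) hM.ne', logb_self_eq_one (by norm_num), add_comm]

theorem logb_three_step_add_one_le {N : ℕ} (hN : 0 < N) :
    logb 3 (step N) + 1 ≤ logb 3 N + 12 / √N := by
  have hN' : (0 : ℝ) < N := by exact_mod_cast hN
  have hs : 1 ≤ √(N : ℝ) := one_le_sqrt.2 (by exact_mod_cast hN)
  have hM : (0 : ℝ) < step N := by linarith [div_three_lt_step N]
  have key := logb_le_logb_add_div_sub_one (by linarith [exp_one_lt_d9] : exp 1 ≤ 3) hN'
    (by linarith [div_three_lt_step N] : (N : ℝ) ≤ 3 * step N)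
  rw [logb_mul (by norm_num) hM.ne', logb_self_eq_one (by norm_num)] at key
  have hratio : 3 * (step N : ℝ) / N - 1 ≤ 12 / √N := by
    have hsq := sq_sqrt hN'.le
    rw [div_sub_one hN'.ne', div_le_div_iff₀ hN' (by positivity)]
    nlinarith [step_le N]
  linarith

theorem logb_three_step_add_one_sub_le {N : ℕ} (hN : 1296 ≤ N) :
    logb 3 (step N) + 1 - 24 / √(step N : ℝ) ≤ logb 3 N - 24 / √N := by
  have hN' : (0 : ℝ) < N := by exact_mod_cast (by omega : 0 < N)
  have hs : 0 < √(N : ℝ) := sqrt_pos.2 hN'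
  have hM : 0 < √(step N : ℝ) := sqrt_pos.2 (by linarith [div_three_lt_step N])
  have hgain : 36 / √(N : ℝ) ≤ 24 / √(step N : ℝ) := by
    rw [div_le_div_iff₀ hs hM]
    linarith [sqrt_step_le hN]
  have := logb_three_step_add_one_le (N := N) (by omega)
  have : 12 / √(N : ℝ) + 24 / √N = 36 / √N := by ring
  linarith

section Recursion

variable {F : ℕ → ℕ}

theorem natCast_recursion (h2 : ∀ N : ℕ, 8 < N → F N = F (step N) + 1) :
    ∀ N : ℕ, 8 < N → (F N : ℝ) = F (step N) + 1 :=
  fun N hN => by exact_mod_cast h2 N hN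

theorem logb_three_sub_two_le (h1 : ∀ N : ℕ, N ≤ 8 → F N = 1)
    (h2 : ∀ N : ℕ, 8 < N → F N = F (step N) + 1) (N : ℕ) : logb 3 N - 2 ≤ F N := by
  refine subsolution_le (Φ := fun N => logb 3 N - 2) (fun N hN => step_lt hN)
    (natCast_recursion h2) (fun N hN => ?_) (fun N hN => ?_) N
  · rw [h1 N hN, Nat.cast_one, sub_le_iff_le_add]
    rcases N.eq_zero_or_pos with rfl | hpos
    · norm_num
    · rw [logb_le_iff_le_rpow (by norm_num) (by exact_mod_cast hpos)]
      norm_num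
      exact_mod_cast (by omega : N ≤ 27)
  · linarith [logb_three_le_logb_three_step_add_one (N := N) (by omega)]

theorem natCast_le_add_one (h1 : ∀ N : ℕ, N ≤ 8 → F N = 1)
    (h2 : ∀ N : ℕ, 8 < N → F N = F (step N) + 1) (N : ℕ) : (F N : ℝ) ≤ N + 1 := by
  refine le_supersolution (Φ := fun N => (N : ℝ) + 1) (fun N hN => step_lt hN)
    (natCast_recursion h2) (fun N hN => ?_) (fun N hN => ?_) N
  · simp [h1 N hN]
  · simpa using (by exact_mod_cast step_lt hN : (step N : ℝ) + 1 ≤ N)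

theorem le_logb_three_add (h1 : ∀ N : ℕ, N ≤ 8 → F N = 1)
    (h2 : ∀ N : ℕ, 8 < N → F N = F (step N) + 1) (N : ℕ) :
    F N ≤ logb 3 N + 1321 - 24 / √N := by
  refine le_supersolution (Φ := fun N => logb 3 N + 1321 - 24 / √N) (n₀ := 1296)
    (fun N hN => step_lt (by omega)) (fun N hN => natCast_recursion h2 N (by omega))
    (fun N hN => ?_) (fun N hN => ?_) N
  · have hF : (F N : ℝ) ≤ 1297 := by
      have : (N : ℝ) ≤ 1296 := by exact_mod_cast hN
      linarith [natCast_le_add_one h1 h2 N]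
    have hsqrt : 24 / √(N : ℝ) ≤ 24 := by
      rcases N.eq_zero_or_pos with rfl | hpos
      · simp
      · exact div_le_self (by norm_num) (one_le_sqrt.2 (by exact_mod_cast hpos))
    linarith [logb_natCast_nonneg (by norm_num : (1 : ℝ) ≤ 3) N]
  · linarith [logb_three_step_add_one_sub_le (N := N) (by omega)]

end Recursion

end Ftilde

open Ftilde in
theorem Ftilde_eq_log3_add_O1 (F : ℕ → ℕ)
    (h1 : ∀ N : ℕ, N ≤ 8 → F N = 1)
    (h2 : ∀ N : ℕ, 8 < N →
      F N = F (Nat.floor ((N : ℝ) / 3 + Real.logb 2 N + 1)) + 1) :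
    ∃ C : ℝ, ∀ N : ℕ, 2 ≤ N → |(F N : ℝ) - Real.logb 3 N| ≤ C := by
  refine ⟨1321, fun N _ => abs_le.2 ⟨?_, ?_⟩⟩
  · linarith [logb_three_sub_two_le h1 h2 N]
  · linarith [le_logb_three_add h1 h2 N, div_nonneg (by norm_num : (0 : ℝ) ≤ 24) (sqrt_nonneg N)]
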